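/- With the Fock space operators a_i^- defined by the explicit action formulas on the basis of W_p, for all i < j the annihilation operators q-supercommute: a_i^- a_j^- - (-1)^{θ_i θ_j} q · a_j^- a_i^- = 0 as operators on W_p. -/

import Mathlib

/-!
Both orders of applying `a_i^-` and `a_j^-` send `|p; r)` to a multiple of the same basis vector
`|p; r - e_i - e_j)`. Since `i < j`, lowering `r_j` changes neither the sign nor the power of `q`
attached to `a_i^-`, while lowering `r_i` lowers `r_1 + ⋯ + r_{j-1}` by one and flips the sign
of `a_j^-` by `(-1)^{θ_i θ_j}`. The square roots agree because `[r_i], [r_j] ≥ 0` lets them split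
into products of square roots of the same four q-integers.
-/

noncomputable section

/-- q-integer [x] = (q^x - q^{-x})/(q - q^{-1}). -/
def qb (q : ℝ) (x : ℤ) : ℝ := (q ^ x - q ^ (-x)) / (q - q⁻¹)

/-- q-factorial [x]! = [1][2]⋯[x]. -/
def qfact (q : ℝ) (x : ℕ) : ℝ := ∏ k ∈ Finset.Icc 1 x, qb q (k : ℤ)

/-- Free module on all tuples; the Fock space W_p is spanned by valid tuples. -/
abbrev Wp (N : ℕ) := (Fin N → ℕ) →₀ ℝ

/-- θ grading: 0 for the first n (bosonic) indices, 1 for the rest (fermionic). -/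
def th (n : ℕ) {N : ℕ} (i : Fin N) : ℕ := if (i : ℕ) < n then 0 else 1

/-- valid tuples: fermionic entries ≤ 1 and total sum ≤ p. -/
def valid (n : ℕ) {N : ℕ} (p : ℕ) (r : Fin N → ℕ) : Prop :=
  (∀ i : Fin N, n ≤ (i : ℕ) → r i ≤ 1) ∧ ∑ i, r i ≤ p

/-- sign (-1)^{θ_i (θ_1 r_1 + ⋯ + θ_{i-1} r_{i-1})}. -/
def sgn (n : ℕ) {N : ℕ} (i : Fin N) (r : Fin N → ℕ) : ℝ :=
  (-1 : ℝ) ^ (th n i * ∑ j ∈ Finset.univ.filter (fun j : Fin N => j < i), th n j * r j)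

/-- r_1 + ⋯ + r_{i-1}. -/
def Ssum {N : ℕ} (i : Fin N) (r : Fin N → ℕ) : ℕ :=
  ∑ j ∈ Finset.univ.filter (fun j : Fin N => j < i), r j

/-- creation operator a_i^+. -/
def aP (n : ℕ) {N : ℕ} (p : ℕ) (q : ℝ) (i : Fin N) : Wp N →ₗ[ℝ] Wp N :=
  Finsupp.lift (Wp N) ℝ (Fin N → ℕ) fun r =>
    (sgn n i r * q ^ (-(Ssum i r : ℤ)) * (1 - (th n i : ℝ) * (r i : ℝ)) *
      Real.sqrt (qb q ((r i : ℤ) + 1) * qb q ((p : ℤ) - ∑ l, (r l : ℤ)))) •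
      Finsupp.single (Function.update r i (r i + 1)) 1

/-- annihilation operator a_i^-. -/
def aM (n : ℕ) {N : ℕ} (p : ℕ) (q : ℝ) (i : Fin N) : Wp N →ₗ[ℝ] Wp N :=
  Finsupp.lift (Wp N) ℝ (Fin N → ℕ) fun r =>
    (sgn n i r * q ^ ((Ssum i r : ℤ)) *
      Real.sqrt (qb q (r i : ℤ) * qb q ((p : ℤ) - ∑ l, (r l : ℤ) + 1))) •
      Finsupp.single (Function.update r i (r i - 1)) 1

/-- Cartan operator H_i, diagonal on the basis. -/
def Hop (n : ℕ) {N : ℕ} (p : ℕ) (i : Fin N) : Wp N →ₗ[ℝ] Wp N :=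
  Finsupp.lift (Wp N) ℝ (Fin N → ℕ) fun r =>
    ((p : ℝ) - (-1 : ℝ) ^ th n i * (r i : ℝ) - ∑ j, (r j : ℝ)) • Finsupp.single r 1

open Finset Function

lemma Finset.sum_update_add_self {ι M : Type*} [AddCommMonoid M] [DecidableEq ι]
    {s : Finset ι} {i : ι} (hi : i ∈ s) (f : ι → M) (v : M) :
    ∑ k ∈ s, update f i v k + f i = ∑ k ∈ s, f k + v := by
  rw [sum_update_of_mem hi, sum_eq_add_sum_sdiff_singleton_of_mem hi]
  abel

lemma qb_zero (q : ℝ) : qb q 0 = 0 := by simp [qb]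

lemma qb_nonneg {q : ℝ} (hq : 0 < q) {x : ℤ} (hx : 0 ≤ x) : 0 ≤ qb q x := by
  rcases le_total 1 q with h | h
  · have hpow : q ^ (-x) ≤ q ^ x := zpow_le_zpow_right₀ h (by omega)
    have hinv : q⁻¹ ≤ 1 := inv_le_one_of_one_le₀ h
    exact div_nonneg (by linarith) (by linarith)
  · have hpow : q ^ x ≤ q ^ (-x) := zpow_le_zpow_right_of_le_one₀ hq h (by omega)
    have hinv : 1 ≤ q⁻¹ := one_le_inv₀ hq |>.mpr h
    exact div_nonneg_of_nonpos (by linarith) (by linarith)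

section Coefficients

variable (n p : ℕ) {N : ℕ} (q : ℝ)

def aMCoeff (i : Fin N) (r : Fin N → ℕ) : ℝ :=
  sgn n i r * q ^ (Ssum i r : ℤ) * √(qb q (r i) * qb q (p - ∑ l, (r l : ℤ) + 1))

lemma aM_single (i : Fin N) (r : Fin N → ℕ) :
    aM n p q i (Finsupp.single r 1) =
      aMCoeff n p q i r • Finsupp.single (update r i (r i - 1)) 1 := by
  simp [aM, aMCoeff, Finsupp.lift_apply, Finsupp.sum_single_index]

variable {n p q}

lemma aMCoeff_eq (hq : 0 < q) (i : Fin N) (r : Fin N → ℕ) :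
    aMCoeff n p q i r =
      sgn n i r * q ^ (Ssum i r : ℤ) * √(qb q (r i)) * √(qb q (p - ∑ l, (r l : ℤ) + 1)) := by
  rw [aMCoeff, Real.sqrt_mul (qb_nonneg hq (by positivity)), mul_assoc _ √_]

lemma aMCoeff_of_eq_zero {i : Fin N} {r : Fin N → ℕ} (hi : r i = 0) : aMCoeff n p q i r = 0 := by
  simp [aMCoeff, hi, qb_zero]

end Coefficients

section Update

variable {N : ℕ} {r : Fin N → ℕ}

lemma Ssum_update_of_le {i k : Fin N} (h : i ≤ k) (v : ℕ) : Ssum i (update r k v) = Ssum i r :=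
  sum_update_of_notMem (by simpa using h) r v

lemma sgn_update_of_le (n : ℕ) {i k : Fin N} (h : i ≤ k) (v : ℕ) :
    sgn n i (update r k v) = sgn n i r := by
  simp_rw [sgn, apply_update (fun k x => th n k * x)]
  rw [sum_update_of_notMem (by simpa using h)]

lemma Ssum_update_pred_of_lt {i j : Fin N} (h : i < j) (hi : r i ≠ 0) :
    Ssum j r = Ssum j (update r i (r i - 1)) + 1 := by
  have := sum_update_add_self (s := univ.filter (· < j)) (by simpa using h) r (r i - 1)
  rw [Ssum, Ssum]
  omega

lemma sgn_update_pred_of_lt (n : ℕ) {i j : Fin N} (h : i < j) (hi : r i ≠ 0) :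
    sgn n j r = (-1) ^ (th n i * th n j) * sgn n j (update r i (r i - 1)) := by
  set w : Fin N → ℕ := fun k => th n k * r k
  have hsum := sum_update_add_self (s := univ.filter (· < j)) (by simpa using h) w
    (th n i * (r i - 1))
  have hwi : w i = th n i * (r i - 1) + th n i := by
    rw [← mul_add_one, Nat.sub_add_cancel (Nat.one_le_iff_ne_zero.mpr hi)]
  have hweight : ∑ k ∈ univ.filter (· < j), w k =
      ∑ k ∈ univ.filter (· < j), update w i (th n i * (r i - 1)) k + th n i := by
    omega
  simp_rw [sgn, apply_update (fun k x => th n k * x), ← pow_add]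
  rw [hweight]
  ring

lemma sum_update_pred {k : Fin N} (hk : r k ≠ 0) :
    ∑ l, (update r k (r k - 1) l : ℤ) = ∑ l, (r l : ℤ) - 1 := by
  have := sum_update_add_self (mem_univ k) r (r k - 1)
  have hcast : ((∑ l, update r k (r k - 1) l : ℕ) : ℤ) = ((∑ l, r l : ℕ) : ℤ) - 1 := by omega
  exact_mod_cast hcast

end Update

lemma aMCoeff_mul_comm {n p N : ℕ} {q : ℝ} (hq : 0 < q) {i j : Fin N} (hij : i < j)
    (r : Fin N → ℕ) :
    aMCoeff n p q j r * aMCoeff n p q i (update r j (r j - 1)) =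
      (-1) ^ (th n i * th n j) * q *
        (aMCoeff n p q i r * aMCoeff n p q j (update r i (r i - 1))) := by
  by_cases hj : r j = 0
  · have hj' : update r i (r i - 1) j = 0 := by rwa [update_of_ne hij.ne']
    rw [aMCoeff_of_eq_zero hj, aMCoeff_of_eq_zero hj', zero_mul, mul_zero, mul_zero]
  by_cases hi : r i = 0
  · have hi' : update r j (r j - 1) i = 0 := by rwa [update_of_ne hij.ne]
    rw [aMCoeff_of_eq_zero hi, aMCoeff_of_eq_zero hi', zero_mul, mul_zero, mul_zero]
  simp only [aMCoeff_eq hq, sum_update_pred hi, sum_update_pred hj,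
    update_of_ne hij.ne, update_of_ne hij.ne', Ssum_update_of_le hij.le, sgn_update_of_le n hij.le,
    Ssum_update_pred_of_lt hij hi, sgn_update_pred_of_lt n hij hi]
  push_cast
  rw [zpow_add_one₀ hq.ne']
  ring

theorem annihilation_q_supercommute_general (n m p : ℕ) (q : ℝ) (hq : 0 < q) (i j : Fin (n + m))
    (hij : i < j) (r : Fin (n + m) → ℕ) :
    aM n p q i (aM n p q j (Finsupp.single r 1)) -
        ((-1 : ℝ) ^ (th n i * th n j) * q) •
          aM n p q j (aM n p q i (Finsupp.single r 1)) = 0 := by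
  have hlower : update (update r j (r j - 1)) i (r i - 1) =
      update (update r i (r i - 1)) j (r j - 1) := update_comm hij.ne' _ _ r
  simp only [aM_single, map_smul, update_of_ne hij.ne, update_of_ne hij.ne', hlower, smul_smul,
    aMCoeff_mul_comm hq hij, sub_self]

/-- The annihilation operators q-supercommute: for i < j,
a_i^- a_j^- - (-1)^{θ_i θ_j} q · a_j^- a_i^- = 0 on W_p. -/
theorem annihilation_q_supercommute (n m p : ℕ) (hn : 1 ≤ n) (hm : 1 ≤ m) (hp : 1 ≤ p)
    (q : ℝ) (hq : 0 < q) (hq1 : q ≠ 1) (i j : Fin (n + m)) (hij : i < j)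
    (r : Fin (n + m) → ℕ) (hr : valid n p r) :
    aM n p q i (aM n p q j (Finsupp.single r 1)) -
        ((-1 : ℝ) ^ (th n i * th n j) * q) •
          aM n p q j (aM n p q i (Finsupp.single r 1)) = 0 :=
  annihilation_q_supercommute_general n m p q hq i j hij r
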